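/- No geometric hyperplane of G₃ is properly contained in another: if A, B ∈ {C_p : p ≠ 0} ∪ {H_p : p ∈ (Z₂)⁶} and A ⊆ B, then A = B. -/

import Mathlib

/-- `V₃ = (ℤ₂)⁶`, vectors written `x = (a₁,a₂,a₃,b₁,b₂,b₃)`. -/
abbrev V : Type := Fin 6 → ZMod 2

/-- The standard symplectic form `⟨x,x'⟩ = Σᵢ (aᵢ bᵢ' + bᵢ aᵢ')`. -/
def sp (x y : V) : ZMod 2 :=
  (x 0 * y 3 + x 3 * y 0) + (x 1 * y 4 + x 4 * y 1) + (x 2 * y 5 + x 5 * y 2)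

/-- The quadratic form `Q₀(x) = Σᵢ aᵢ bᵢ`. -/
def Q0 (x : V) : ZMod 2 := x 0 * x 3 + x 1 * x 4 + x 2 * x 5

/-- The quadratic form `Q_p(x) = Q₀(x) + ⟨x,p⟩`. -/
def Qf (p x : V) : ZMod 2 := Q0 x + sp x p

/-- The symplectic transvection `T_p(x) = x + ⟨x,p⟩ p`. -/
def T (p x : V) : V := x + sp x p • p
/-- The perp set of `p`. -/
def Cset (p : V) : Set V := {x | x ≠ 0 ∧ sp p x = 0}

/-- The quadric hyperplane of `p`. -/
def Hset (p : V) : Set V := {x | x ≠ 0 ∧ Qf p x = 0}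

/-!
Each hyperplane is the set of nonzero zeros of a function `x ↦ c Q₀(x) + ⟨p, x⟩`, and these
functions form a binary linear code of length 64 with weights `0, 28, 32, 36`: a nonzero
linear form has weight 32, and completing the square turns `Q₀ + ⟨p, ·⟩` into a translate of
`Q₀` or `Q₀ + 1`, of weight 28 or 36. An inclusion of zero sets `f⁻¹(0) ⊆ g⁻¹(0)` splits the
support of `f` as `supp g ⊔ supp (f - g)`, so `wt f = wt g + wt (f - g)`; no nonzero weight of
the code is the difference of two others, hence `f = g`.
-/

open Finset

theorem hammingNorm_comp_equiv {ι κ β : Type*} [Fintype ι] [Fintype κ] [Zero β]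
    [DecidableEq β] (x : ι → β) (σ : κ ≃ ι) : hammingNorm (x ∘ σ) = hammingNorm x :=
  card_equiv σ (by simp)

theorem hammingNorm_add_hammingNorm_add_one {ι : Type*} [Fintype ι] (x : ι → ZMod 2) :
    hammingNorm x + hammingNorm (x + 1) = Fintype.card ι := by
  have h : ∀ a : ZMod 2, a + 1 ≠ 0 ↔ ¬a ≠ 0 := by decide
  simp only [hammingNorm, Pi.add_apply, Pi.one_apply, h]
  exact card_filter_add_card_filter_not _

theorem hammingNorm_mul_two_of_add_one {G : Type*} [AddGroup G] [Fintype G] {f : G → ZMod 2}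
    {e : G} (he : ∀ x, f (x + e) = f x + 1) : hammingNorm f * 2 = Fintype.card G := by
  have htrans := hammingNorm_comp_equiv f (Equiv.addRight e)
  rw [show f ∘ Equiv.addRight e = f + 1 from funext he] at htrans
  have := hammingNorm_add_hammingNorm_add_one f
  omega

theorem hammingDist_add_hammingNorm_of_imp {ι : Type*} [Fintype ι] [DecidableEq ι]
    {f g : ι → ZMod 2} (h : ∀ i, f i = 0 → g i = 0) :
    hammingDist f g + hammingNorm g = hammingNorm f := by
  have key : ∀ a b : ZMod 2,
      (a = 0 → b = 0) → (a ≠ 0 ↔ a ≠ b ∨ b ≠ 0) ∧ ¬(a ≠ b ∧ b ≠ 0) := by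
    decide
  rw [hammingDist, hammingNorm, hammingNorm, ← card_union_of_disjoint]
  · congr 1
    ext i
    simp [(key _ _ (h i)).1]
  · rw [disjoint_filter]
    exact fun i _ h₁ h₂ => (key _ _ (h i)).2 ⟨h₁, h₂⟩

theorem sp_comm (x y : V) : sp x y = sp y x := by
  unfold sp; ring

theorem sp_add_right (p x y : V) : sp p (x + y) = sp p x + sp p y := by
  simp only [sp, Pi.add_apply]; ring

theorem sp_single_add_three (p : V) (i : Fin 6) : sp p (Pi.single (i + 3) 1) = p i := by
  fin_cases i <;> simp [sp]

theorem exists_sp_eq_one {p : V} (hp : p ≠ 0) : ∃ e, sp p e = 1 := by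
  obtain ⟨i, hi⟩ := Function.ne_iff.mp hp
  have hne : ∀ a : ZMod 2, a ≠ 0 → a = 1 := by decide
  exact ⟨_, (sp_single_add_three p i).trans (hne _ hi)⟩

theorem Q0_add (x y : V) : Q0 (x + y) = Q0 x + Q0 y + sp x y := by
  simp only [Q0, sp, Pi.add_apply]; ring

theorem card_V : Fintype.card V = 64 := by simp

theorem hammingNorm_Q0 : hammingNorm Q0 = 28 := by decide

def hyperplaneFn (c : ZMod 2) (p x : V) : ZMod 2 := c * Q0 x + sp p x

theorem hyperplaneFn_sub (c d : ZMod 2) (p q : V) :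
    hyperplaneFn c p - hyperplaneFn d q = hyperplaneFn (c - d) (p - q) := by
  funext x
  simp only [hyperplaneFn, sp, Pi.sub_apply]; ring

theorem hammingDist_hyperplaneFn (c d : ZMod 2) (p q : V) :
    hammingDist (hyperplaneFn c p) (hyperplaneFn d q) =
      hammingNorm (hyperplaneFn (c - d) (p - q)) := by
  rw [hammingDist_comm, hammingDist_eq_hammingNorm, neg_add_eq_sub, hyperplaneFn_sub]

theorem hyperplaneFn_apply_zero (c : ZMod 2) (p : V) : hyperplaneFn c p 0 = 0 := by
  simp [hyperplaneFn, Q0, sp]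

theorem Cset_eq (p : V) : Cset p = {x | x ≠ 0 ∧ hyperplaneFn 0 p x = 0} := by
  simp [Cset, hyperplaneFn]

theorem Hset_eq (p : V) : Hset p = {x | x ≠ 0 ∧ hyperplaneFn 1 p x = 0} := by
  simp [Hset, Qf, hyperplaneFn, sp_comm]

theorem hammingNorm_hyperplaneFn_zero {p : V} (hp : p ≠ 0) :
    hammingNorm (hyperplaneFn 0 p) = 32 := by
  obtain ⟨e, he⟩ := exists_sp_eq_one hp
  have := hammingNorm_mul_two_of_add_one (f := hyperplaneFn 0 p) (e := e)
    (by simp [hyperplaneFn, sp_add_right, he])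
  rw [card_V] at this
  omega

theorem hammingNorm_hyperplaneFn_one (p : V) :
    hammingNorm (hyperplaneFn 1 p) = 28 ∨ hammingNorm (hyperplaneFn 1 p) = 36 := by
  -- completing the square: `Q₀ x + ⟨p, x⟩ = Q₀ (x + p) + Q₀ p`
  have hsq : hyperplaneFn 1 p = (Q0 + fun _ => Q0 p) ∘ Equiv.addRight p := by
    funext x
    have h2 : (2 : ZMod 2) = 0 := rfl
    simp only [hyperplaneFn, Function.comp_apply, Equiv.coe_addRight, Pi.add_apply, Q0_add]
    rw [sp_comm p x]
    linear_combination (-Q0 p) * h2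
  rw [hsq, hammingNorm_comp_equiv]
  rcases (by decide : ∀ a : ZMod 2, a = 0 ∨ a = 1) (Q0 p) with h | h <;> rw [h]
  · left
    change hammingNorm (Q0 + 0) = 28
    rw [add_zero, hammingNorm_Q0]
  · right
    change hammingNorm (Q0 + 1) = 36
    have := hammingNorm_add_hammingNorm_add_one Q0
    rw [hammingNorm_Q0, card_V] at this
    omega

theorem hammingNorm_hyperplaneFn (c : ZMod 2) (p : V) :
    hammingNorm (hyperplaneFn c p) ∈ ({0, 28, 32, 36} : Finset ℕ) := by
  rcases (by decide : ∀ a : ZMod 2, a = 0 ∨ a = 1) c with rfl | rfl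
  · by_cases hp : p = 0
    · simp [hp, show hyperplaneFn 0 0 = 0 from funext fun x => by simp [hyperplaneFn, sp]]
    · simp [hammingNorm_hyperplaneFn_zero hp]
  · rcases hammingNorm_hyperplaneFn_one p with h | h <;> simp [h]

theorem exists_hyperplaneFn {A : Set V}
    (hA : (∃ p : V, p ≠ 0 ∧ A = Cset p) ∨ (∃ p : V, A = Hset p)) :
    ∃ c p, A = {x | x ≠ 0 ∧ hyperplaneFn c p x = 0} ∧
      hammingNorm (hyperplaneFn c p) ≠ 0 := by
  rcases hA with ⟨p, hp, rfl⟩ | ⟨p, rfl⟩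
  · exact ⟨0, p, Cset_eq p, by simp [hammingNorm_hyperplaneFn_zero hp]⟩
  · refine ⟨1, p, Hset_eq p, ?_⟩
    rcases hammingNorm_hyperplaneFn_one p with h | h <;> simp [h]

/-- No geometric hyperplane of `G₃` is properly contained in another one. -/
theorem stmt14 (A B : Set V)
    (hA : (∃ p : V, p ≠ 0 ∧ A = Cset p) ∨ (∃ p : V, A = Hset p))
    (hB : (∃ p : V, p ≠ 0 ∧ B = Cset p) ∨ (∃ p : V, B = Hset p))
    (hAB : A ⊆ B) : A = B := by
  obtain ⟨c, p, rfl, hf⟩ := exists_hyperplaneFn hA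
  obtain ⟨d, q, rfl, hg⟩ := exists_hyperplaneFn hB
  have himp : ∀ x, hyperplaneFn c p x = 0 → hyperplaneFn d q x = 0 := fun x hx => by
    rcases eq_or_ne x 0 with rfl | hx0
    · exact hyperplaneFn_apply_zero d q
    · exact (hAB ⟨hx0, hx⟩).2
  have hsplit := hammingDist_add_hammingNorm_of_imp himp
  have hdist := hammingNorm_hyperplaneFn (c - d) (p - q)
  rw [← hammingDist_hyperplaneFn] at hdist
  have hf' := hammingNorm_hyperplaneFn c p
  have hg' := hammingNorm_hyperplaneFn d q
  simp only [mem_insert, mem_singleton] at hdist hf' hg'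
  have hfg : hyperplaneFn c p = hyperplaneFn d q := hammingDist_eq_zero.mp (by omega)
  rw [hfg]
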